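/- arXiv:1303.4289 — 2 statements merged into one kernel-verified Lean document; each statement's English description precedes it below -/
import Mathlib

section
/- Fix a channel coefficient h ∈ ℂ with h ≠ 0, and set f_opt = (1 + σw²/(σx²·|h|²)) · x/‖x‖². Then f_opt is a global minimizer of the zeroth-order symbol-estimate MSE: for every nonzero filter f ∈ ℂ^B, M_dc(f_opt) ≤ M_dc(f). -/
open MeasureTheory

/-- `φ(f) = fᴴ x = Σᵢ conj(fᵢ)·xᵢ`. -/
noncomputable def phi {B : ℕ} (x f : Fin B → ℂ) : ℂ :=
  ∑ i, (starRingEnd ℂ) (f i) * x i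

/-- Squared Euclidean norm `‖f‖² = Σᵢ |fᵢ|²`. -/
noncomputable def nsq {B : ℕ} (f : Fin B → ℂ) : ℝ :=
  ∑ i, Complex.normSq (f i)

/-- Zeroth-order symbol-estimate MSE of the ZF equalizer, deterministic channel `h`. -/
noncomputable def Mdc {B : ℕ} (σx2 σw2 : ℝ) (h : ℂ) (x f : Fin B → ℂ) : ℝ :=
  (σx2 * (Complex.normSq h * Complex.normSq (phi x f - 1) + σw2 * nsq f) + σw2) /
    (Complex.normSq h * Complex.normSq (phi x f) + σw2 * nsq f)

/-- The optimal filter `f_opt = (1 + σw²/(σx²·|h|²)) · x/‖x‖²`. -/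
noncomputable def fOptDc {B : ℕ} (σx2 σw2 : ℝ) (h : ℂ) (x : Fin B → ℂ) : Fin B → ℂ :=
  fun i => ((1 + σw2 / (σx2 * Complex.normSq h) : ℝ) : ℂ) * (x i / (nsq x : ℂ))

/-!
With `a = |h|²`, `p = φ(f)` and `D = a|p|² + σw²‖f‖²`, the MSE is
`σx² + (c - 2σx²a·Re p)/D` with `c = σx²a + σw²`. Cauchy–Schwarz gives `D ≥ K·(Re p)²` with
`K = a + σw²/‖x‖²`, and completing the square `(c - σx²a·Re p)² ≥ 0` bounds the fraction below
by `-(σx²a)²/(cK)`. The filter `f_opt` is the multiple of `x` with `p = c/(σx²a)`, for which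
both inequalities are equalities.
-/

open Complex

noncomputable def MdcMin {B : ℕ} (σx2 σw2 : ℝ) (h : ℂ) (x : Fin B → ℂ) : ℝ :=
  σx2 - (σx2 * normSq h) ^ 2 / ((σx2 * normSq h + σw2) * (normSq h + σw2 / nsq x))

lemma nsq_eq_norm_sq {B : ℕ} (f : Fin B → ℂ) : nsq f = ‖WithLp.toLp 2 f‖ ^ 2 := by
  simp [EuclideanSpace.norm_sq_eq, nsq, normSq_eq_norm_sq]

lemma phi_eq_inner {B : ℕ} (x f : Fin B → ℂ) :
    phi x f = inner ℂ (WithLp.toLp 2 f) (WithLp.toLp 2 x) := by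
  simp [PiLp.inner_apply, phi, mul_comm]

lemma nsq_pos {B : ℕ} {f : Fin B → ℂ} (hf : f ≠ 0) : 0 < nsq f := by
  rw [nsq_eq_norm_sq]
  exact pow_pos (norm_pos_iff.mpr fun h => hf (by simpa using congrArg WithLp.ofLp h)) 2

lemma normSq_phi_le {B : ℕ} (x f : Fin B → ℂ) : normSq (phi x f) ≤ nsq f * nsq x := by
  rw [normSq_eq_norm_sq, nsq_eq_norm_sq, nsq_eq_norm_sq, ← mul_pow, phi_eq_inner]
  exact pow_le_pow_left₀ (norm_nonneg _) (norm_inner_le_norm _ _) 2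

lemma phi_ofReal_mul_self {B : ℕ} (x : Fin B → ℂ) (t : ℝ) :
    phi x (fun i => (t : ℂ) * x i) = t * nsq x := by
  simp only [phi, nsq, map_mul, conj_ofReal, mul_assoc, ← Finset.mul_sum, ofReal_sum,
    normSq_eq_conj_mul_self]

lemma nsq_ofReal_mul {B : ℕ} (f : Fin B → ℂ) (t : ℝ) :
    nsq (fun i => (t : ℂ) * f i) = t ^ 2 * nsq f := by
  simp only [nsq, normSq_mul, normSq_ofReal, Finset.mul_sum, sq]

lemma neg_sq_div_le_div {b c D K r : ℝ} (hc : 0 < c) (hK : 0 < K) (hD : 0 < D)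
    (hr : K * r ^ 2 ≤ D) : -(b ^ 2 / (c * K)) ≤ (c - 2 * b * r) / D := by
  rw [neg_le_iff_add_nonneg, div_add_div _ _ hD.ne' (by positivity)]
  refine div_nonneg ?_ (by positivity)
  nlinarith [sq_nonneg (c - b * r), mul_le_mul_of_nonneg_left hr (sq_nonneg b)]

lemma Mdc_eq {B : ℕ} (σx2 σw2 : ℝ) (h : ℂ) (x f : Fin B → ℂ)
    (hD : normSq h * normSq (phi x f) + σw2 * nsq f ≠ 0) :
    Mdc σx2 σw2 h x f = σx2 + (σx2 * normSq h + σw2 - 2 * (σx2 * normSq h) * (phi x f).re) /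
      (normSq h * normSq (phi x f) + σw2 * nsq f) := by
  rw [Mdc, normSq_sub, add_div' _ _ _ hD]
  simp only [map_one, mul_one]
  ring

lemma MdcMin_le_Mdc {B : ℕ} {σx2 σw2 : ℝ} (hσx : 0 ≤ σx2) (hσw : 0 < σw2) (h : ℂ)
    {x f : Fin B → ℂ} (hx : x ≠ 0) (hf : f ≠ 0) :
    MdcMin σx2 σw2 h x ≤ Mdc σx2 σw2 h x f := by
  have ha := normSq_nonneg h
  have hE := nsq_pos hx
  have hn := nsq_pos hf
  have hD : 0 < normSq h * normSq (phi x f) + σw2 * nsq f := by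
    have := normSq_nonneg (phi x f)
    positivity
  have hK : (normSq h + σw2 / nsq x) * (phi x f).re ^ 2
      ≤ normSq h * normSq (phi x f) + σw2 * nsq f :=
    calc (normSq h + σw2 / nsq x) * (phi x f).re ^ 2
        ≤ (normSq h + σw2 / nsq x) * normSq (phi x f) := by
          gcongr
          exact (sq _).trans_le (re_sq_le_normSq _)
      _ = normSq h * normSq (phi x f) + σw2 * (normSq (phi x f) / nsq x) := by ring
      _ ≤ normSq h * normSq (phi x f) + σw2 * nsq f := by
          gcongr
          exact div_le_of_le_mul₀ hE.le hn.le (normSq_phi_le x f)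
  rw [MdcMin, Mdc_eq _ _ _ _ _ hD.ne', sub_eq_add_neg]
  gcongr σx2 + ?_
  exact neg_sq_div_le_div (by positivity) (by positivity) hD hK

lemma fOptDc_eq {B : ℕ} (σx2 σw2 : ℝ) (h : ℂ) (x : Fin B → ℂ) :
    fOptDc σx2 σw2 h x =
      fun i => (((1 + σw2 / (σx2 * normSq h)) / nsq x : ℝ) : ℂ) * x i := by
  funext i
  simp only [fOptDc, ofReal_div]
  ring

lemma Mdc_fOptDc {B : ℕ} {σx2 σw2 : ℝ} (hσx : 0 < σx2) (hσw : 0 < σw2) {h : ℂ}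
    (hh : h ≠ 0) {x : Fin B → ℂ} (hx : x ≠ 0) :
    Mdc σx2 σw2 h x (fOptDc σx2 σw2 h x) = MdcMin σx2 σw2 h x := by
  have hE := nsq_pos hx
  have ha : 0 < normSq h := normSq_pos.mpr hh
  set c := 1 + σw2 / (σx2 * normSq h) with hc
  have hc0 : 0 < c := by positivity
  have hphi : phi x (fOptDc σx2 σw2 h x) = c := by
    rw [fOptDc_eq, ← hc, phi_ofReal_mul_self, ← ofReal_mul, div_mul_cancel₀ _ hE.ne']
  have hnsq : nsq (fOptDc σx2 σw2 h x) = c ^ 2 / nsq x := by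
    rw [fOptDc_eq, ← hc, nsq_ofReal_mul]
    field_simp
  have hD : normSq h * normSq (phi x (fOptDc σx2 σw2 h x)) + σw2 * nsq (fOptDc σx2 σw2 h x)
      ≠ 0 := by
    rw [hphi, hnsq, normSq_ofReal]
    positivity
  rw [Mdc_eq _ _ _ _ _ hD, hphi, hnsq, ofReal_re, normSq_ofReal, MdcMin, hc]
  field_simp
  ring

theorem fopt_optimal_zeroth_order_dc_mse_general
    (B : ℕ) (x : Fin B → ℂ) (hx : x ≠ 0)
    (σx2 σw2 : ℝ) (hσx : 0 < σx2) (hσw : 0 < σw2)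
    (h : ℂ) (hh : h ≠ 0) :
    ∀ f : Fin B → ℂ, f ≠ 0 →
      Mdc σx2 σw2 h x (fOptDc σx2 σw2 h x) ≤ Mdc σx2 σw2 h x f := fun _ hf =>
  (Mdc_fOptDc hσx hσw hh hx).trans_le (MdcMin_le_Mdc hσx.le hσw h hx hf)

/-- `f_opt = (1 + σw²/(σx²·|h|²)) · x/‖x‖²` is a global minimizer of the
zeroth-order symbol-estimate MSE `[MSE_x^dc(ZF)]₀`. -/
theorem fopt_optimal_zeroth_order_dc_mse
    (B : ℕ) (hB : 1 ≤ B) (x : Fin B → ℂ) (hx : x ≠ 0)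
    (σx2 σw2 : ℝ) (hσx : 0 < σx2) (hσw : 0 < σw2)
    (h : ℂ) (hh : h ≠ 0) :
    ∀ f : Fin B → ℂ, f ≠ 0 →
      Mdc σx2 σw2 h x (fOptDc σx2 σw2 h x) ≤ Mdc σx2 σw2 h x f :=
  fopt_optimal_zeroth_order_dc_mse_general B x hx σx2 σw2 hσx hσw h hh
end

section
/- Fix ρ > 0 (the prior second moment E[|h|²] of the random channel). Then neither the MVU filter f_MVU = x/‖x‖² nor the MMSE filter f_MMSE = ρ·x/(ρ‖x‖² + σw²) is a minimizer of the zeroth-order symbol-estimate MSE with random channel: there exists a nonzero filter f ∈ ℂ^B with M_rc(f) < M_rc(f_MVU), and there exists a nonzero filter f ∈ ℂ^B with M_rc(f) < M_rc(f_MMSE). (Proposition 2.) -/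
open MeasureTheory

/-- Zeroth-order symbol-estimate MSE of the ZF equalizer, random channel with
prior second moment `ρ = E[|h|²]`. -/
noncomputable def Mrc {B : ℕ} (σx2 σw2 ρ : ℝ) (x f : Fin B → ℂ) : ℝ :=
  (σx2 * (ρ * Complex.normSq (phi x f - 1) + σw2 * nsq f) + σw2) /
    (ρ * Complex.normSq (phi x f) + σw2 * nsq f)

/-- The MVU channel-estimating filter `f_MVU = x / ‖x‖²`. -/
noncomputable def fMVU {B : ℕ} (x : Fin B → ℂ) : Fin B → ℂ :=
  fun i => x i / (nsq x : ℂ)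

/-- The MMSE channel-estimating filter `f_MMSE = ρ·x / (ρ‖x‖² + σw²)`. -/
noncomputable def fMMSE {B : ℕ} (σw2 ρ : ℝ) (x : Fin B → ℂ) : Fin B → ℂ :=
  fun i => (ρ : ℂ) * x i / ((ρ * nsq x + σw2 : ℝ) : ℂ)

lemma phi_smul {B : ℕ} (x : Fin B → ℂ) (c : ℝ) :
    phi x (fun i => (c : ℂ) * x i) = ((c * nsq x : ℝ) : ℂ) := by
  simp only [phi, nsq, map_mul, Complex.conj_ofReal]
  push_cast
  rw [Finset.mul_sum]
  congr 1
  ext i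
  rw [mul_assoc]
  congr 1
  rw [Complex.normSq_eq_conj_mul_self]

lemma nsq_smul {B : ℕ} (x : Fin B → ℂ) (c : ℝ) :
    nsq (fun i => (c : ℂ) * x i) = c^2 * nsq x := by
  simp only [nsq, Complex.normSq_mul, Complex.normSq_ofReal, Finset.mul_sum, sq]

lemma Mrc_smul {B : ℕ} (σx2 σw2 ρ : ℝ) (x : Fin B → ℂ) (c : ℝ) :
    Mrc σx2 σw2 ρ x (fun i => (c : ℂ) * x i) =
      (σx2 * (ρ * (c * nsq x - 1)^2 + σw2 * (c^2 * nsq x)) + σw2) /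
        (ρ * (c * nsq x)^2 + σw2 * (c^2 * nsq x)) := by
  rw [Mrc, phi_smul, nsq_smul]
  have h1 : ((c * nsq x : ℝ) : ℂ) - 1 = ((c * nsq x - 1 : ℝ) : ℂ) := by push_cast; ring
  rw [h1, Complex.normSq_ofReal, Complex.normSq_ofReal]; ring_nf

lemma key_ineq (σx2 σw2 ρ s c1 c2 : ℝ) (hσx : 0 < σx2) (hσw : 0 < σw2)
    (hρ : 0 < ρ) (hs : 0 < s) (hc2 : 0 < c2)
    (hc1 : σx2 * ρ * s * c1 = σx2 * ρ + σw2)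
    (hne : σx2 * ρ * s * c2 ≠ σx2 * ρ + σw2) :
    (σx2 * (ρ * (c1 * s - 1)^2 + σw2 * (c1^2 * s)) + σw2) /
        (ρ * (c1 * s)^2 + σw2 * (c1^2 * s)) <
      (σx2 * (ρ * (c2 * s - 1)^2 + σw2 * (c2^2 * s)) + σw2) /
        (ρ * (c2 * s)^2 + σw2 * (c2^2 * s)) := by
  have hc1pos : 0 < c1 := by
    have h : 0 < σx2 * ρ * s * c1 := by rw [hc1]; positivity
    nlinarith [mul_pos (mul_pos hσx hρ) hs]
  have hD1 : 0 < ρ * (c1 * s)^2 + σw2 * (c1^2 * s) := by positivity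
  have hD2 : 0 < ρ * (c2 * s)^2 + σw2 * (c2^2 * s) := by positivity
  rw [div_lt_div_iff₀ hD1 hD2]
  have hsq : 0 < (σx2 * ρ * s * c2 - (σx2 * ρ + σw2))^2 := by
    have := sub_ne_zero.mpr hne; positivity
  have hid : (σx2*ρ*s)^2 *
      ((σx2 * (ρ * (c1 * s - 1)^2 + σw2 * (c1^2 * s)) + σw2) * (ρ * (c2 * s)^2 + σw2 * (c2^2 * s))
       - (σx2 * (ρ * (c2 * s - 1)^2 + σw2 * (c2^2 * s)) + σw2) * (ρ * (c1 * s)^2 + σw2 * (c1^2 * s)))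
      = -((σx2*ρ+σw2) * (s*(ρ*s+σw2)) * ((σx2*ρ*s)*c2 - (σx2*ρ+σw2))^2) := by
    linear_combination ((-1)*σw2^2*ρ*s^2 + (-1)*σw2^3*s + (-2)*σx2*σw2*ρ^2*s^2 + 2*σx2*σw2*ρ^2*s^3*c2 + (-1)*σx2*σw2*ρ^2*s^3*c1 + (-2)*σx2*σw2^2*ρ*s + 2*σx2*σw2^2*ρ*s^2*c2 + (-1)*σx2*σw2^2*ρ*s^2*c1 + (-1)*σx2^2*ρ^3*s^2 + 2*σx2^2*ρ^3*s^3*c2 + (-1)*σx2^2*ρ^3*s^3*c1 + (-2)*σx2^2*ρ^3*s^4*c2^2 + 2*σx2^2*ρ^3*s^4*c1*c2 + (-1)*σx2^2*σw2*ρ^2*s + 2*σx2^2*σw2*ρ^2*s^2*c2 + (-1)*σx2^2*σw2*ρ^2*s^2*c1 + (-2)*σx2^2*σw2*ρ^2*s^3*c2^2 + 2*σx2^2*σw2*ρ^2*s^3*c1*c2) * hc1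
  have hpos : 0 < (σx2*ρ+σw2) * (s*(ρ*s+σw2)) * ((σx2*ρ*s)*c2 - (σx2*ρ+σw2))^2 :=
    mul_pos (mul_pos (add_pos (mul_pos hσx hρ) hσw) (mul_pos hs (add_pos (mul_pos hρ hs) hσw))) hsq
  have hB2 : 0 < (σx2*ρ*s)^2 := by positivity
  nlinarith [hid, hpos, hB2]

/-- Proposition 2: neither the MVU nor the MMSE estimator is optimal for
minimizing `[MSE_x^rc(ZF)]₀` when the prior channel distribution is known. -/
theorem mvu_mmse_not_optimal_zeroth_order_rc_mse
    (B : ℕ) (hB : 1 ≤ B) (x : Fin B → ℂ) (hx : x ≠ 0)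
    (σx2 σw2 : ℝ) (hσx : 0 < σx2) (hσw : 0 < σw2)
    (ρ : ℝ) (hρ : 0 < ρ) :
    (∃ f : Fin B → ℂ, f ≠ 0 ∧ Mrc σx2 σw2 ρ x f < Mrc σx2 σw2 ρ x (fMVU x)) ∧
    (∃ f : Fin B → ℂ, f ≠ 0 ∧ Mrc σx2 σw2 ρ x f < Mrc σx2 σw2 ρ x (fMMSE σw2 ρ x)) := by
  classical
  obtain ⟨j, hj⟩ : ∃ j, x j ≠ 0 := by
    by_contra h
    push_neg at h
    exact hx (funext h)
  have hs : 0 < nsq x := by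
    have : 0 < Complex.normSq (x j) := Complex.normSq_pos.mpr hj
    exact Finset.sum_pos' (fun i _ => Complex.normSq_nonneg _) ⟨j, Finset.mem_univ j, this⟩
  set s := nsq x with hsdef
  set c1 : ℝ := (σx2*ρ + σw2) / (σx2*ρ*s) with hc1def
  have hBpos : 0 < σx2*ρ*s := by positivity
  have hc1 : σx2 * ρ * s * c1 = σx2 * ρ + σw2 := by
    rw [hc1def]; field_simp
  have hc1pos : 0 < c1 := by rw [hc1def]; positivity
  have hfne : (fun i => (c1 : ℂ) * x i) ≠ 0 := by
    intro h
    have := congrFun h j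
    simp only [Pi.zero_apply, mul_eq_zero] at this
    rcases this with h1 | h1
    · exact (ne_of_gt hc1pos) (by exact_mod_cast h1)
    · exact hj h1
  constructor
  · refine ⟨fun i => (c1 : ℂ) * x i, hfne, ?_⟩
    have hMVU : fMVU x = fun i => ((1/s : ℝ) : ℂ) * x i := by
      funext i
      simp only [fMVU, ← hsdef]
      push_cast
      field_simp
    rw [hMVU, Mrc_smul, Mrc_smul, ← hsdef]
    exact key_ineq σx2 σw2 ρ s c1 (1/s) hσx hσw hρ hs (by positivity) hc1
      (by
        have : σx2 * ρ * s * (1/s) = σx2 * ρ := by field_simp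
        rw [this]; intro h; linarith)
  · refine ⟨fun i => (c1 : ℂ) * x i, hfne, ?_⟩
    have hMMSE : fMMSE σw2 ρ x = fun i => ((ρ/(ρ*s + σw2) : ℝ) : ℂ) * x i := by
      funext i
      simp only [fMMSE, ← hsdef]
      push_cast
      ring
    rw [hMMSE, Mrc_smul, Mrc_smul, ← hsdef]
    refine key_ineq σx2 σw2 ρ s c1 (ρ/(ρ*s + σw2)) hσx hσw hρ hs (by positivity) hc1 ?_
    intro h
    have hden : 0 < ρ*s + σw2 := by positivity
    have h2 : σx2 * ρ * s * ρ = (σx2*ρ + σw2) * (ρ*s + σw2) := by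
      field_simp at h
      linarith [h]
    nlinarith [mul_pos hσw (mul_pos hρ hs), mul_pos hσx (mul_pos hρ hσw), sq_nonneg σw2]
end
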